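/- arXiv:2209.08341 — 2 statements merged into one kernel-verified Lean document; each statement's English description precedes it below -/
import Mathlib

section
/- There exists a constant K>0, depending only on T, such that for all t∈[0,T] and all x,y∈[0,1], ∫_0^1 |G_t(x,z) − G_t(y,z)|² dz ≤ K·|x−y|. Equivalently (by Parseval's identity), ∑_{j=1}^∞ (sin²(jπt)/(j²π²))·|φ_j(x)−φ_j(y)|² ≤ K·|x−y|. -/
open MeasureTheory Real Filter
open scoped ENNReal

noncomputable section

/-- φ_j(x) = √2 sin(jπx) -/
def phi (j : ℕ) (x : ℝ) : ℝ := Real.sqrt 2 * Real.sin (j * Real.pi * x)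

/-- κ_n(z) = ⌊zn⌋/n -/
def kappan (n : ℕ) (z : ℝ) : ℝ := (⌊z * n⌋ : ℝ) / n

/-- Π_n, piecewise linear interpolation with nodes 0, 1/n, …, 1 -/
def Pin (n : ℕ) (w : ℝ → ℝ) (x : ℝ) : ℝ :=
  w (kappan n x) + ((n : ℝ) * x - (⌊x * n⌋ : ℝ)) * (w (kappan n x + 1 / n) - w (kappan n x))

/-- c^n_j = sin²(jπ/(2n)) / (jπ/(2n))² -/
def cn (n j : ℕ) : ℝ :=
  (Real.sin (j * Real.pi / (2 * n)))^2 / (j * Real.pi / (2 * n))^2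

/-- j-th term of the Green function series -/
def greenTerm (j : ℕ) (t x y : ℝ) : ℝ :=
  Real.sin (j * Real.pi * t) / (j * Real.pi) * phi j x * phi j y

/-- Green function G_t(x,y) = ∑_{j≥1} sin(jπt)/(jπ) φ_j(x) φ_j(y), as limit of partial sums -/
def greenG (t x y : ℝ) : ℝ :=
  limUnder atTop (fun N : ℕ => ∑ j ∈ Finset.Icc 1 N, greenTerm j t x y)

/-- discrete Green function G^n_t(x,y) -/
def greenGn (n : ℕ) (t x y : ℝ) : ℝ :=
  ∑ j ∈ Finset.Icc 1 (n - 1),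
    Real.sin (j * Real.pi * t * Real.sqrt (cn n j)) / (j * Real.pi * Real.sqrt (cn n j)) *
      Pin n (phi j) x * phi j (kappan n y)

/-- discrete Dirichlet Laplacian Δ_n -/
def discLap (n : ℕ) (w : ℝ → ℝ) (z : ℝ) : ℝ :=
  if z ∈ Set.Ico ((1:ℝ)/n) 1 then
    (n:ℝ)^2 * (w (kappan n z + 1/n) - 2 * w (kappan n z) + w (kappan n z - 1/n))
  else 0

/-- O_T = [0,T] × [0,1] -/
def OT (T : ℝ) : Set (ℝ × ℝ) := Set.Icc 0 T ×ˢ Set.Icc 0 1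

/-- f solves the skeleton equation of the stochastic wave equation with control h -/
def SolvesSkeleton (T : ℝ) (u₀ v₀ b σ : ℝ → ℝ) (h f : ℝ → ℝ → ℝ) : Prop :=
  ∀ t ∈ Set.Icc (0:ℝ) T, ∀ x ∈ Set.Icc (0:ℝ) 1,
    f t x = (∫ z in (0:ℝ)..1, greenG t x z * v₀ z)
      + deriv (fun s => ∫ z in (0:ℝ)..1, greenG s x z * u₀ z) t
      + (∫ s in (0:ℝ)..t, ∫ z in (0:ℝ)..1, greenG (t - s) x z * b (f s z))
      + ∫ s in (0:ℝ)..t, ∫ z in (0:ℝ)..1, greenG (t - s) x z * σ (f s z) * h s z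

/-- f solves the discrete (spatial finite difference, level n) skeleton equation with control h -/
def SolvesDiscSkeleton (T : ℝ) (n : ℕ) (u₀ v₀ b σ : ℝ → ℝ) (h f : ℝ → ℝ → ℝ) : Prop :=
  ∀ t ∈ Set.Icc (0:ℝ) T, ∀ x ∈ Set.Icc (0:ℝ) 1,
    f t x = (∫ z in (0:ℝ)..1, greenGn n t x z * v₀ (kappan n z))
      + (∫ z in (0:ℝ)..1, deriv (fun s => greenGn n s x z) t * u₀ (kappan n z))
      + (∫ s in (0:ℝ)..t, ∫ z in (0:ℝ)..1, greenGn n (t - s) x z * b (f s (kappan n z)))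
      + ∫ s in (0:ℝ)..t, ∫ z in (0:ℝ)..1, greenGn n (t - s) x z * σ (f s (kappan n z)) * h s z

/-- h is square integrable on O_T -/
def SqIntOn (T : ℝ) (h : ℝ → ℝ → ℝ) : Prop :=
  MeasureTheory.IntegrableOn (fun p : ℝ × ℝ => (h p.1 p.2)^2) (OT T)

/-- squared L²(O_T) norm -/
def L2sq (T : ℝ) (h : ℝ → ℝ → ℝ) : ℝ := ∫ p in OT T, (h p.1 p.2)^2

/-- one-point rate functional J_y for the continuous skeleton equation -/
def Jy (T x₀ y : ℝ) (u₀ v₀ b σ : ℝ → ℝ) (f : ℝ → ℝ → ℝ) : ℝ≥0∞ :=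
  if f T x₀ = y then
    sInf { c : ℝ≥0∞ | ∃ h : ℝ → ℝ → ℝ, SqIntOn T h ∧ SolvesSkeleton T u₀ v₀ b σ h f ∧
      c = ENNReal.ofReal (1/2 * L2sq T h) }
  else ⊤

/-- one-point rate functional J^n_y for the discrete skeleton equation of level n -/
def Jny (T x₀ y : ℝ) (u₀ v₀ b σ : ℝ → ℝ) (n : ℕ) (f : ℝ → ℝ → ℝ) : ℝ≥0∞ :=
  if f T x₀ = y then
    sInf { c : ℝ≥0∞ | ∃ h : ℝ → ℝ → ℝ, SqIntOn T h ∧ SolvesDiscSkeleton T n u₀ v₀ b σ h f ∧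
      c = ENNReal.ofReal (1/2 * L2sq T h) }
  else ⊤

/-- the control recovering f in the discrete skeleton equation (inverse of Υⁿ) -/
def controlOf (T : ℝ) (b σ : ℝ → ℝ) (n : ℕ) (f : ℝ → ℝ → ℝ) (t x : ℝ) : ℝ :=
  (derivWithin (derivWithin (fun s => f s (kappan n x)) (Set.Icc 0 T)) (Set.Icc 0 T) t
    - discLap n (f t) (kappan n x) - b (f t (kappan n x))) / σ (f t (kappan n x))

end

open Finset Topology

/-!
By Parseval, `∫₀¹ |G_t(x,·) - G_t(y,·)|²` is the sum of the squared sine coefficients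
`c_j = sin(jπt)/(jπ) · (φ_j(x) - φ_j(y))`. As `sin` is 1-Lipschitz and bounded by 1,
`c_j² ≤ 2 min(|x - y|², j⁻²)`, and splitting the sum at `j ≈ 1/|x - y|` bounds it by `10 |x - y|`.
The series defining `G` converges only conditionally: each term is a combination of four terms of
sawtooth series `∑ sin(jθ)/j`, which converge by Dirichlet's test. The bound on the partial sums
then passes to `G` by Fatou's lemma.
-/

theorem two_mul_sin_half_mul_sum_range_sin (θ : ℝ) (n : ℕ) :
    2 * sin (θ / 2) * ∑ i ∈ range n, sin ((i + 1) * θ) = cos (θ / 2) - cos ((n + 1 / 2) * θ) := by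
  induction n with
  | zero => simp; ring_nf
  | succ n ih =>
    rw [sum_range_succ, mul_add, ih, two_mul_sin_mul_sin,
      show θ / 2 - ((n : ℕ) + 1) * θ = -((n + 1 / 2) * θ) by ring, cos_neg]
    push_cast; ring_nf

theorem abs_sin_half_mul_abs_sum_range_sin_le (θ : ℝ) (n : ℕ) :
    |sin (θ / 2)| * |∑ i ∈ range n, sin ((i + 1) * θ)| ≤ 1 := by
  have h : |2 * sin (θ / 2) * ∑ i ∈ range n, sin ((i + 1) * θ)| ≤ 2 := by
    rw [two_mul_sin_half_mul_sum_range_sin]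
    exact (abs_sub _ _).trans
      (by linarith [abs_cos_le_one (θ / 2), abs_cos_le_one ((n + 1 / 2) * θ)])
  rw [abs_mul, abs_mul, abs_two] at h
  linarith

theorem cauchySeq_sum_range_sin_div (θ : ℝ) :
    CauchySeq fun n : ℕ => ∑ i ∈ range n, sin ((i + 1) * θ) / (i + 1) := by
  by_cases hθ : sin (θ / 2) = 0
  · obtain ⟨k, hk⟩ := sin_eq_zero_iff.mp hθ
    have hzero : ∀ i : ℕ, sin ((i + 1) * θ) = 0 := fun i => by
      rw [show ((i : ℝ) + 1) * θ = ((2 * k * (i + 1) : ℤ) : ℝ) * π by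
        push_cast; linear_combination (-2 * ((i : ℝ) + 1)) * hk, sin_int_mul_pi]
    simpa [hzero] using cauchySeq_const (0 : ℝ)
  · have hbound (n : ℕ) : ‖∑ i ∈ range n, sin ((i + 1) * θ)‖ ≤ |sin (θ / 2)|⁻¹ := by
      rw [norm_eq_abs, ← one_div, le_div_iff₀' (abs_pos.2 hθ)]
      exact abs_sin_half_mul_abs_sum_range_sin_le θ n
    have hanti : Antitone fun i : ℕ => ((i : ℝ) + 1)⁻¹ := fun a b hab =>
      inv_anti₀ (by positivity) (by simpa using hab)
    simpa [div_eq_inv_mul] using hanti.cauchySeq_series_mul_of_tendsto_zero_of_bounded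
      (by simpa [one_div] using tendsto_one_div_add_atTop_nhds_zero_nat (𝕜 := ℝ)) hbound

theorem exists_tendsto_sum_sin_div (θ : ℝ) :
    ∃ L, Tendsto (fun N : ℕ => ∑ j ∈ Icc 1 N, sin (j * θ) / j) atTop (𝓝 L) := by
  obtain ⟨L, hL⟩ := cauchySeq_tendsto_of_complete (cauchySeq_sum_range_sin_div θ)
  refine ⟨L, hL.congr fun N => ?_⟩
  have hshift := sum_Ico_add' (fun j : ℕ => sin (j * θ) / (j : ℝ)) 0 N 1
  push_cast at hshift
  rw [range_eq_Ico, hshift]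
  rfl

theorem greenTerm_eq {j : ℕ} (hj : j ≠ 0) (t x z : ℝ) :
    greenTerm j t x z = (2 * π)⁻¹ * (sin (j * (π * (t + x - z))) / j
      + sin (j * (π * (t - x + z))) / j - sin (j * (π * (t + x + z))) / j
      - sin (j * (π * (t - x - z))) / j) := by
  have hj : (j : ℝ) ≠ 0 := Nat.cast_ne_zero.2 hj
  have h2 : √2 ^ 2 = 2 := sq_sqrt zero_le_two
  simp only [greenTerm, phi, mul_add, mul_sub, sin_add, sin_sub, cos_add, cos_sub]
  field_simp
  linear_combination (2 * sin (j * π * t) * sin (j * π * x) * sin (j * π * z)) * h2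

theorem tendsto_sum_greenTerm (t x z : ℝ) :
    Tendsto (fun N : ℕ => ∑ j ∈ Icc 1 N, greenTerm j t x z) atTop (𝓝 (greenG t x z)) := by
  refine tendsto_nhds_limUnder ?_
  obtain ⟨A, hA⟩ := exists_tendsto_sum_sin_div (π * (t + x - z))
  obtain ⟨B, hB⟩ := exists_tendsto_sum_sin_div (π * (t - x + z))
  obtain ⟨C, hC⟩ := exists_tendsto_sum_sin_div (π * (t + x + z))
  obtain ⟨D, hD⟩ := exists_tendsto_sum_sin_div (π * (t - x - z))
  refine ⟨(2 * π)⁻¹ * (A + B - C - D), ((((hA.add hB).sub hC).sub hD).const_mul _).congr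
    fun N => ?_⟩
  rw [sum_congr rfl fun j hj => greenTerm_eq (by grind) t x z, ← mul_sum]
  simp only [sum_add_distrib, sum_sub_distrib]

theorem integral_cos_int_mul_pi_mul (m : ℤ) :
    ∫ z in (0 : ℝ)..1, cos (m * π * z) = if m = 0 then 1 else 0 := by
  split_ifs with hm
  · simp [hm]
  · have hmπ : (m : ℝ) * π ≠ 0 := mul_ne_zero (Int.cast_ne_zero.2 hm) pi_ne_zero
    rw [intervalIntegral.integral_comp_mul_left (fun z => cos z) hmπ]
    simp [integral_cos, sin_int_mul_pi]

@[fun_prop]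
theorem continuous_phi (j : ℕ) : Continuous (phi j) := by
  unfold phi; fun_prop

theorem integral_phi_mul_phi (j : ℕ) {k : ℕ} (hk : k ≠ 0) :
    ∫ z in (0 : ℝ)..1, phi j z * phi k z = if j = k then 1 else 0 := by
  have hprod (z : ℝ) : phi j z * phi k z
      = cos (((j - k : ℤ) : ℝ) * π * z) - cos (((j + k : ℤ) : ℝ) * π * z) := by
    have h2 : √2 ^ 2 = 2 := sq_sqrt zero_le_two
    rw [phi, phi, show √2 * sin (j * π * z) * (√2 * sin (k * π * z))
      = √2 ^ 2 / 2 * (2 * sin (j * π * z) * sin (k * π * z)) by ring, h2, two_mul_sin_mul_sin]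
    push_cast; ring_nf
  simp_rw [hprod]
  rw [intervalIntegral.integral_sub ((by fun_prop : Continuous _).intervalIntegrable _ _)
    ((by fun_prop : Continuous _).intervalIntegrable _ _),
    integral_cos_int_mul_pi_mul, integral_cos_int_mul_pi_mul]
  simp only [sub_eq_zero, Int.natCast_inj]
  have hjk : (j + k : ℤ) ≠ 0 := by omega
  simp [hjk]

theorem integral_sum_mul_phi_sq {s : Finset ℕ} (hs : 0 ∉ s) (c : ℕ → ℝ) :
    ∫ z in (0 : ℝ)..1, (∑ j ∈ s, c j * phi j z) ^ 2 = ∑ j ∈ s, c j ^ 2 := by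
  have hne {j : ℕ} (hj : j ∈ s) : j ≠ 0 := ne_of_mem_of_not_mem hj hs
  simp_rw [sq, sum_mul_sum]
  rw [intervalIntegral.integral_finsetSum fun j _ =>
    (by fun_prop : Continuous _).intervalIntegrable _ _]
  refine sum_congr rfl fun j hj => ?_
  rw [intervalIntegral.integral_finsetSum fun k _ =>
    (by fun_prop : Continuous _).intervalIntegrable _ _]
  simp_rw [mul_mul_mul_comm (c j) (phi j _), intervalIntegral.integral_const_mul]
  rw [sum_congr rfl fun k hk => by rw [integral_phi_mul_phi j (hne hk)]]
  simp [hj]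

theorem summable_inv_sq : Summable fun j : ℕ => ((j : ℝ) ^ 2)⁻¹ :=
  summable_nat_pow_inv.2 one_lt_two

theorem summable_min_inv_sq {a : ℝ} (ha : 0 ≤ a) :
    Summable fun j : ℕ => min a ((j : ℝ) ^ 2)⁻¹ :=
  summable_inv_sq.of_nonneg_of_le (fun _ => by positivity) fun _ => min_le_right _ _

theorem tsum_inv_sq_nat_add_succ_le (m : ℕ) :
    ∑' i : ℕ, (((i + (m + 1) : ℕ) : ℝ) ^ 2)⁻¹ ≤ 2 / (m + 1) := by
  refine Real.tsum_le_of_sum_range_le (fun i => by positivity) fun n => ?_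
  calc ∑ i ∈ range n, (((i + (m + 1) : ℕ) : ℝ) ^ 2)⁻¹
      = ∑ i ∈ Ico (m + 1) (n + (m + 1)), ((i : ℝ) ^ 2)⁻¹ := by
        rw [range_eq_Ico, sum_Ico_add' (fun i : ℕ => ((i : ℝ) ^ 2)⁻¹), zero_add]
    _ ≤ ∑ i ∈ Ioo m (n + (m + 1)), ((i : ℝ) ^ 2)⁻¹ := by
        refine sum_le_sum_of_subset_of_nonneg (fun i => by simp only [mem_Ico, mem_Ioo]; omega)
          fun i _ _ => by positivity
    _ ≤ 2 / (m + 1) := sum_Ioo_inv_sq_le m _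

theorem tsum_min_sq_inv_sq_le {δ : ℝ} (hδ₀ : 0 ≤ δ) (hδ₁ : δ ≤ 1) :
    ∑' j : ℕ, min (δ ^ 2) ((j : ℝ) ^ 2)⁻¹ ≤ 5 * δ := by
  rcases hδ₀.eq_or_lt with rfl | hδ
  · simp
  set m := ⌈δ⁻¹⌉₊
  have hm : δ⁻¹ ≤ m := Nat.le_ceil _
  have hm' : (m : ℝ) + 1 ≤ 3 / δ := by
    have hceil := Nat.ceil_lt_add_one (inv_nonneg.2 hδ₀)
    have hinv : 1 ≤ δ⁻¹ := (one_le_inv₀ hδ).2 hδ₁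
    rw [div_eq_mul_inv]
    linarith
  have hsum := summable_min_inv_sq (sq_nonneg δ)
  rw [← hsum.sum_add_tsum_nat_add (m + 1)]
  have hhead : ∑ i ∈ range (m + 1), min (δ ^ 2) ((i : ℝ) ^ 2)⁻¹ ≤ 3 * δ := by
    calc _ ≤ ∑ i ∈ range (m + 1), δ ^ 2 := sum_le_sum fun i _ => min_le_left _ _
      _ = ((m : ℝ) + 1) * δ ^ 2 := by simp
      _ ≤ 3 / δ * δ ^ 2 := by gcongr
      _ = 3 * δ := by field_simp
  have htail : ∑' i : ℕ, min (δ ^ 2) ((((i + (m + 1) : ℕ)) : ℝ) ^ 2)⁻¹ ≤ 2 * δ := by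
    calc _ ≤ ∑' i : ℕ, (((i + (m + 1) : ℕ) : ℝ) ^ 2)⁻¹ :=
          Summable.tsum_le_tsum (fun i => min_le_right _ _)
            (hsum.comp_injective (add_left_injective _))
            (summable_inv_sq.comp_injective (add_left_injective _))
      _ ≤ 2 / (m + 1) := tsum_inv_sq_nat_add_succ_le m
      _ ≤ 2 * δ := by
        rw [div_le_iff₀ (by positivity)]
        have hδm : 1 ≤ δ * m := (mul_inv_cancel₀ hδ.ne').symm.le.trans (by gcongr)
        linarith
  linarith

theorem integral_le_of_tendsto_of_integral_le {α : Type*} [MeasurableSpace α] {μ : Measure α}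
    {f : ℕ → α → ℝ} {g : α → ℝ} {C : ℝ} (hf_nonneg : ∀ n, 0 ≤ᵐ[μ] f n)
    (hf_int : ∀ n, Integrable (f n) μ)
    (hlim : ∀ᵐ a ∂μ, Tendsto (fun n => f n a) atTop (𝓝 (g a)))
    (hC : ∀ n, ∫ a, f n a ∂μ ≤ C) :
    ∫ a, g a ∂μ ≤ C := by
  have hg_nonneg : 0 ≤ᵐ[μ] g := by
    filter_upwards [hlim, ae_all_iff.2 hf_nonneg] with a ha hfa using ge_of_tendsto' ha hfa
  have hg_meas : AEStronglyMeasurable g μ :=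
    aestronglyMeasurable_of_tendsto_ae _ (fun n => (hf_int n).1) hlim
  rw [integral_eq_lintegral_of_nonneg_ae hg_nonneg hg_meas]
  refine ENNReal.toReal_le_of_le_ofReal ((integral_nonneg_of_ae (hf_nonneg 0)).trans (hC 0)) ?_
  calc ∫⁻ a, ENNReal.ofReal (g a) ∂μ
      = ∫⁻ a, liminf (fun n => ENNReal.ofReal (f n a)) atTop ∂μ := by
        refine lintegral_congr_ae ?_
        filter_upwards [hlim] with a ha
        exact ((ENNReal.continuous_ofReal.tendsto _).comp ha).liminf_eq.symm
    _ ≤ liminf (fun n => ∫⁻ a, ENNReal.ofReal (f n a) ∂μ) atTop :=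
        lintegral_liminf_le' fun n => (hf_int n).1.aemeasurable.ennreal_ofReal
    _ = liminf (fun n => ENNReal.ofReal (∫ a, f n a ∂μ)) atTop := by
        simp_rw [ofReal_integral_eq_lintegral_ofReal (hf_int _) (hf_nonneg _)]
    _ ≤ ENNReal.ofReal C :=
        liminf_le_of_frequently_le' (.of_forall fun n => ENNReal.ofReal_le_ofReal (hC n))

noncomputable def greenCoeff (t x y : ℝ) (j : ℕ) : ℝ :=
  sin (j * π * t) / (j * π) * (phi j x - phi j y)

theorem greenCoeff_sq (t x y : ℝ) (j : ℕ) :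
    greenCoeff t x y j ^ 2
      = sin (j * π * t) ^ 2 / ((j : ℝ) ^ 2 * π ^ 2) * |phi j x - phi j y| ^ 2 := by
  rw [greenCoeff, mul_pow, div_pow, mul_pow, sq_abs]

theorem tendsto_sum_greenCoeff_mul_phi (t x y z : ℝ) :
    Tendsto (fun N : ℕ => ∑ j ∈ Icc 1 N, greenCoeff t x y j * phi j z) atTop
      (𝓝 (greenG t x z - greenG t y z)) := by
  refine ((tendsto_sum_greenTerm t x z).sub (tendsto_sum_greenTerm t y z)).congr fun N => ?_
  rw [← sum_sub_distrib]
  refine sum_congr rfl fun j _ => ?_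
  simp only [greenTerm, greenCoeff]
  ring

theorem sq_phi_sub_phi (j : ℕ) (x y : ℝ) :
    (phi j x - phi j y) ^ 2 = 2 * (sin (j * π * x) - sin (j * π * y)) ^ 2 := by
  rw [phi, phi, ← mul_sub, mul_pow, sq_sqrt zero_le_two]

theorem greenCoeff_sq_le (t x y : ℝ) (j : ℕ) :
    greenCoeff t x y j ^ 2 ≤ 2 * min (|x - y| ^ 2) ((j : ℝ) ^ 2)⁻¹ := by
  rcases eq_or_ne j 0 with rfl | hj
  · simp [greenCoeff, sq_nonneg]
  set d := sin (j * π * x) - sin (j * π * y)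
  have hjπ : 0 < (j : ℝ) * π := by positivity
  have hd_lip : d ^ 2 ≤ ((j : ℝ) * π) ^ 2 * |x - y| ^ 2 := by
    rw [← mul_pow, ← abs_of_pos hjπ, ← abs_mul, mul_sub, sq_le_sq]
    simpa [abs_abs] using abs_sin_sub_sin_le (j * π * x) (j * π * y)
  have hd_bdd : d ^ 2 ≤ 4 := by
    have htri := abs_sub (sin (j * π * x)) (sin (j * π * y))
    nlinarith [abs_sin_le_one (j * π * x), abs_sin_le_one (j * π * y), sq_abs d, abs_nonneg d]
  have hcoeff : greenCoeff t x y j ^ 2 ≤ 2 * d ^ 2 / ((j : ℝ) * π) ^ 2 := by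
    rw [greenCoeff, mul_pow, div_pow, sq_phi_sub_phi, div_mul_eq_mul_div]
    exact div_le_div_of_nonneg_right
      (mul_le_of_le_one_left (by positivity) (sin_sq_le_one _)) (by positivity)
  rw [mul_min_of_nonneg _ _ zero_le_two]
  refine le_min (hcoeff.trans ?_) (hcoeff.trans ?_)
  · rw [div_le_iff₀ (by positivity)]
    nlinarith
  · have hπ : 4 ≤ π ^ 2 := by nlinarith [pi_gt_three]
    rw [div_le_iff₀ (by positivity), mul_pow]
    field_simp
    nlinarith

theorem summable_greenCoeff_sq (t x y : ℝ) : Summable fun j => greenCoeff t x y j ^ 2 :=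
  (summable_inv_sq.mul_left 2).of_nonneg_of_le (fun _ => sq_nonneg _) fun j =>
    (greenCoeff_sq_le t x y j).trans (by gcongr; exact min_le_right _ _)

theorem tsum_greenCoeff_sq_le (t : ℝ) {x y : ℝ} (hxy : |x - y| ≤ 1) :
    ∑' j, greenCoeff t x y j ^ 2 ≤ 10 * |x - y| :=
  calc ∑' j, greenCoeff t x y j ^ 2
      ≤ ∑' j : ℕ, 2 * min (|x - y| ^ 2) ((j : ℝ) ^ 2)⁻¹ :=
        (summable_greenCoeff_sq t x y).tsum_le_tsum (greenCoeff_sq_le t x y)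
          ((summable_min_inv_sq (sq_nonneg _)).mul_left 2)
    _ = 2 * ∑' j : ℕ, min (|x - y| ^ 2) ((j : ℝ) ^ 2)⁻¹ := tsum_mul_left
    _ ≤ 2 * (5 * |x - y|) := by gcongr; exact tsum_min_sq_inv_sq_le (abs_nonneg _) hxy
    _ = 10 * |x - y| := by ring

theorem stmt1_general (T : ℝ) :
    ∃ K : ℝ, 0 < K ∧ ∀ t ∈ Set.Icc (0:ℝ) T, ∀ x ∈ Set.Icc (0:ℝ) 1, ∀ y ∈ Set.Icc (0:ℝ) 1,
      (∫ z in (0:ℝ)..1, |greenG t x z - greenG t y z|^2) ≤ K * |x - y| ∧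
      (∑' j : ℕ, (Real.sin (j * Real.pi * t))^2 / ((j:ℝ)^2 * Real.pi^2) * |phi j x - phi j y|^2)
        ≤ K * |x - y| := by
  refine ⟨10, by norm_num, fun t _ x hx y hy => ?_⟩
  have hxy : |x - y| ≤ 1 :=
    abs_sub_le_iff.2 ⟨by linarith [hx.2, hy.1], by linarith [hx.1, hy.2]⟩
  refine ⟨?_, by simpa only [greenCoeff_sq] using tsum_greenCoeff_sq_le t hxy⟩
  simp_rw [sq_abs, intervalIntegral.integral_of_le zero_le_one]
  refine integral_le_of_tendsto_of_integral_le
    (f := fun N z => (∑ j ∈ Icc 1 N, greenCoeff t x y j * phi j z) ^ 2)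
    (fun N => ae_of_all _ fun z => sq_nonneg _)
    (fun N => (by fun_prop : Continuous _).integrableOn_Ioc)
    (ae_of_all _ fun z => (tendsto_sum_greenCoeff_mul_phi t x y z).pow 2) fun N => ?_
  rw [← intervalIntegral.integral_of_le zero_le_one, integral_sum_mul_phi_sq (by simp)]
  exact ((summable_greenCoeff_sq t x y).sum_le_tsum _ fun j _ => sq_nonneg _).trans
    (tsum_greenCoeff_sq_le t hxy)

theorem stmt1 (T : ℝ) (hT : 0 < T) :
    ∃ K : ℝ, 0 < K ∧ ∀ t ∈ Set.Icc (0:ℝ) T, ∀ x ∈ Set.Icc (0:ℝ) 1, ∀ y ∈ Set.Icc (0:ℝ) 1,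
      (∫ z in (0:ℝ)..1, |greenG t x z - greenG t y z|^2) ≤ K * |x - y| ∧
      (∑' j : ℕ, (Real.sin (j * Real.pi * t))^2 / ((j:ℝ)^2 * Real.pi^2) * |phi j x - phi j y|^2)
        ≤ K * |x - y| :=
  stmt1_general T
end

section
/- There exists a constant K>0, depending only on T, such that for all n∈ℕ⁺, all t∈[0,T] and all x∈[0,1], ∫_0^1 |G^n_t(x,z)|² dz ≤ K. -/
open MeasureTheory Real Filter
open scoped ENNReal

/-!
For fixed `t` and `x`, `z ↦ G^n_t(x, z)` is a step function on the grid `i / n` whose values are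
a combination of the sampled sine modes `φ_j(i / n)`, `1 ≤ j ≤ n - 1`. These are orthonormal for
the discrete inner product `(1 / n) ∑_{i < n} u(i / n) v(i / n)`, so the `L²` norm of `G^n_t(x, ·)`
is the sum of the squared coefficients. By Jordan's inequality `√(c^n_j) ≥ 2 / π`, so the `j`-th
coefficient is at most `√2 / (2 j)` in absolute value, and `∑_j 1 / (2 j²) ≤ 1` gives `K = 1`.
-/

open Finset

lemma sum_range_cos_int_mul_pi_div {n : ℕ} {m : ℤ} (hm₀ : m ≠ 0) (hm : |m| < 2 * n) :
    ∑ i ∈ range n, cos (m * π * i / n) = sin (m * π / 2) ^ 2 := by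
  have hn : (0 : ℝ) < n := by
    have : (0 : ℤ) < n := by linarith [abs_nonneg m]
    exact_mod_cast this
  have hm' : -(2 * n : ℝ) < m ∧ (m : ℝ) < 2 * n := by
    obtain ⟨h₁, h₂⟩ := abs_lt.mp hm
    exact ⟨by exact_mod_cast h₁, by exact_mod_cast h₂⟩
  set a : ℝ := m * π / n with ha
  have hsin : sin (a / 2) ≠ 0 := by
    have hπ := pi_pos
    rw [Ne, sin_eq_zero_iff_of_lt_of_lt]
    · rw [ha]; positivity
    · rw [ha, lt_div_iff₀ (by norm_num), lt_div_iff₀ hn]; nlinarith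
    · rw [ha, div_div, div_lt_iff₀ (by positivity)]; nlinarith
  have hsum := sin_mul_sum_cos n a 0
  simp only [add_zero] at hsum
  rw [show n * a / 2 = m * π / 2 by rw [ha]; field_simp,
    show (n - 1 : ℝ) * a / 2 = m * π / 2 - a / 2 by rw [ha]; field_simp, cos_sub] at hsum
  have hprod : sin (m * π / 2) * cos (m * π / 2) = 0 := by
    have := sin_two_mul (m * π / 2)
    rw [show 2 * (m * π / 2) = m * π by ring, sin_int_mul_pi] at this
    linarith
  apply mul_left_cancel₀ hsin
  calc sin (a / 2) * ∑ i ∈ range n, cos (m * π * i / n)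
      = sin (a / 2) * ∑ i ∈ range n, cos (a * i) := by
        congr 1; exact sum_congr rfl fun i _ => by rw [ha]; ring_nf
    _ = sin (a / 2) * sin (m * π / 2) ^ 2 := by linear_combination hsum + cos (a / 2) * hprod

lemma sum_range_sin_mul_sin {n j k : ℕ} (hj : 0 < j) (hjn : j < n) (hk : 0 < k) (hkn : k < n) :
    ∑ i ∈ range n, sin (j * π * i / n) * sin (k * π * i / n) =
      if j = k then (n : ℝ) / 2 else 0 := by
  have hterm : ∀ i : ℕ, sin (j * π * i / n) * sin (k * π * i / n) =
      (cos (((j - k : ℤ) : ℝ) * π * i / n) - cos (((j + k : ℤ) : ℝ) * π * i / n)) / 2 := by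
    intro i
    have := two_mul_sin_mul_sin (j * π * i / n) (k * π * i / n)
    push_cast
    rw [show (j - k : ℝ) * π * i / n = j * π * i / n - k * π * i / n by ring,
      show (j + k : ℝ) * π * i / n = j * π * i / n + k * π * i / n by ring]
    linarith
  rw [sum_congr rfl fun i _ => hterm i, ← sum_div, sum_sub_distrib,
    sum_range_cos_int_mul_pi_div (m := j + k) (by omega) (by rw [abs_lt]; omega)]
  split_ifs with hjk
  · subst hjk
    have : sin ((j + j : ℝ) * π / 2) = 0 := by
      rw [show ((j : ℝ) + j) * π / 2 = (j : ℤ) * π by push_cast; ring, sin_int_mul_pi]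
    simp [this]
  · rw [sum_range_cos_int_mul_pi_div (by omega) (by rw [abs_lt]; omega)]
    -- `j + k` and `j - k` have the same parity
    have : sin (((j + k : ℤ) : ℝ) * π / 2) ^ 2 = sin (((j - k : ℤ) : ℝ) * π / 2) ^ 2 := by
      rw [show ((j + k : ℤ) : ℝ) * π / 2 = ((j - k : ℤ) : ℝ) * π / 2 + (k : ℤ) * π by
        push_cast; ring, sin_add_int_mul_pi, mul_pow, zpow_natCast, ← pow_mul,
        (even_two.mul_left k).neg_one_pow, one_mul]
    rw [this, sub_self, zero_div]

lemma sum_range_phi_mul_phi {n j k : ℕ} (hj : 0 < j) (hjn : j < n) (hk : 0 < k) (hkn : k < n) :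
    ∑ i ∈ range n, phi j (i / n) * phi k (i / n) = if j = k then (n : ℝ) else 0 := by
  have hterm : ∀ i : ℕ, phi j (i / n) * phi k (i / n) =
      2 * (sin (j * π * i / n) * sin (k * π * i / n)) := by
    intro i
    simp only [phi, ← mul_div_assoc]
    linear_combination (sin (j * π * i / n) * sin (k * π * i / n)) * mul_self_sqrt zero_le_two
  rw [sum_congr rfl fun i _ => hterm i, ← mul_sum, sum_range_sin_mul_sin hj hjn hk hkn]
  split_ifs <;> ring

lemma kappan_eq_of_mem_Ico {n i : ℕ} (hn : 0 < n) {z : ℝ}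
    (hz : z ∈ Set.Ico (i / n : ℝ) ((i + 1) / n)) :
    kappan n z = i / n := by
  have hn' : (0 : ℝ) < n := by exact_mod_cast hn
  rw [Set.mem_Ico, div_le_iff₀ hn', lt_div_iff₀ hn'] at hz
  have hfloor : ⌊z * n⌋ = (i : ℤ) :=
    Int.floor_eq_iff.mpr ⟨by push_cast; linarith, by push_cast; linarith⟩
  rw [kappan, hfloor]
  push_cast; rfl

lemma integral_comp_kappan {n : ℕ} (hn : 0 < n) (g : ℝ → ℝ) :
    ∫ z in (0 : ℝ)..1, g (kappan n z) = (∑ i ∈ range n, g (i / n)) / n := by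
  have hn' : (0 : ℝ) < n := by exact_mod_cast hn
  set a : ℕ → ℝ := fun i => i / n with ha
  have hle : ∀ i, a i ≤ a (i + 1) := fun i => by
    simp only [ha]; gcongr; linarith
  have heq : ∀ i : ℕ, Set.EqOn (fun z => g (kappan n z)) (fun _ => g (i / n))
      (Set.uIoo (a i) (a (i + 1))) := by
    intro i z hz
    rw [Set.uIoo_of_le (hle i)] at hz
    simp only [kappan_eq_of_mem_Ico hn (Set.Ioo_subset_Ico_self (by simpa [ha] using hz))]
  calc ∫ z in (0 : ℝ)..1, g (kappan n z) = ∫ z in a 0..a n, g (kappan n z) := by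
        simp [ha, hn'.ne']
    _ = ∑ i ∈ range n, ∫ z in a i..a (i + 1), g (kappan n z) :=
        (intervalIntegral.sum_integral_adjacent_intervals fun i _ =>
          intervalIntegrable_const.congr_uIoo (heq i).symm).symm
    _ = ∑ i ∈ range n, g (i / n) / n := by
        refine sum_congr rfl fun i _ => ?_
        rw [intervalIntegral.integral_congr_uIoo (heq i), intervalIntegral.integral_const,
          smul_eq_mul, ha]
        push_cast; field_simp; ring
    _ = (∑ i ∈ range n, g (i / n)) / n := by rw [sum_div]

lemma integral_sq_sum_phi_comp_kappan {n : ℕ} (hn : 0 < n) (a : ℕ → ℝ) :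
    ∫ z in (0 : ℝ)..1, (∑ j ∈ Icc 1 (n - 1), a j * phi j (kappan n z)) ^ 2 =
      ∑ j ∈ Icc 1 (n - 1), a j ^ 2 := by
  have hn' : (n : ℝ) ≠ 0 := by positivity
  refine (integral_comp_kappan hn fun y => (∑ j ∈ Icc 1 (n - 1), a j * phi j y) ^ 2).trans ?_
  have hexpand : ∑ i ∈ range n, (∑ j ∈ Icc 1 (n - 1), a j * phi j (i / n)) ^ 2 =
      ∑ j ∈ Icc 1 (n - 1), ∑ k ∈ Icc 1 (n - 1),
        a j * a k * ∑ i ∈ range n, phi j (i / n) * phi k (i / n) := by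
    simp_rw [sq, sum_mul_sum, mul_sum]
    rw [sum_comm]
    refine sum_congr rfl fun j _ => ?_
    rw [sum_comm]
    exact sum_congr rfl fun k _ => sum_congr rfl fun i _ => by ring
  have hortho : ∀ j ∈ Icc 1 (n - 1), ∑ k ∈ Icc 1 (n - 1),
      a j * a k * ∑ i ∈ range n, phi j (i / n) * phi k (i / n) = a j ^ 2 * n := by
    intro j hj
    rw [mem_Icc] at hj
    have hdiag : ∀ k ∈ Icc 1 (n - 1),
        a j * a k * ∑ i ∈ range n, phi j (i / n) * phi k (i / n) =
          if j = k then a j * a k * n else 0 := by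
      intro k hk
      rw [mem_Icc] at hk
      rw [sum_range_phi_mul_phi (by omega) (by omega) (by omega) (by omega), mul_ite, mul_zero]
    rw [sum_congr rfl hdiag, sum_ite_eq, if_pos (mem_Icc.mpr hj)]
    ring
  rw [hexpand, sum_congr rfl hortho, ← sum_mul, mul_div_cancel_right₀ _ hn']

lemma abs_Pin_le {w : ℝ → ℝ} {M : ℝ} (hw : ∀ y, |w y| ≤ M) (n : ℕ) (x : ℝ) :
    |Pin n w x| ≤ M := by
  set θ := Int.fract (x * n)
  have hθ₀ : 0 ≤ θ := Int.fract_nonneg _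
  have hθ₁ : θ < 1 := Int.fract_lt_one _
  have hPin : Pin n w x = (1 - θ) * w (kappan n x) + θ * w (kappan n x + 1 / n) := by
    rw [Pin, show (n : ℝ) * x - ⌊x * n⌋ = θ by rw [mul_comm]; rfl]; ring
  obtain ⟨h₁, h₂⟩ := abs_le.mp (hw (kappan n x))
  obtain ⟨h₃, h₄⟩ := abs_le.mp (hw (kappan n x + 1 / n))
  rw [hPin, abs_le]
  constructor <;> nlinarith

lemma abs_phi_le (j : ℕ) (y : ℝ) : |phi j y| ≤ √2 := by
  rw [phi, abs_mul, abs_of_nonneg (sqrt_nonneg 2)]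
  exact mul_le_of_le_one_right (sqrt_nonneg 2) (abs_sin_le_one _)

lemma two_div_pi_le_sqrt_cn {n j : ℕ} (hj : 0 < j) (hjn : j ≤ n) : 2 / π ≤ √(cn n j) := by
  have hn : (0 : ℝ) < n := by exact_mod_cast hj.trans_le hjn
  set q : ℝ := j * π / (2 * n) with hq
  have hq₀ : 0 < q := by positivity
  have hq₁ : q ≤ π / 2 := by
    rw [hq, div_le_div_iff₀ (by positivity) two_pos]
    have : (j : ℝ) ≤ n := by exact_mod_cast hjn
    nlinarith [pi_pos]
  have hsin : 0 ≤ sin q := sin_nonneg_of_nonneg_of_le_pi hq₀.le (by linarith)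
  rw [cn, ← hq, ← div_pow, sqrt_sq (div_nonneg hsin hq₀.le), le_div_iff₀ hq₀]
  exact mul_le_sin hq₀.le hq₁

noncomputable def greenGnCoeff (n : ℕ) (t x : ℝ) (j : ℕ) : ℝ :=
  sin (j * π * t * √(cn n j)) / (j * π * √(cn n j)) * Pin n (phi j) x

lemma greenGn_eq_sum (n : ℕ) (t x z : ℝ) :
    greenGn n t x z = ∑ j ∈ Icc 1 (n - 1), greenGnCoeff n t x j * phi j (kappan n z) :=
  rfl

lemma sq_greenGnCoeff_le {n j : ℕ} (hj : 0 < j) (hjn : j ≤ n) (t x : ℝ) :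
    greenGnCoeff n t x j ^ 2 ≤ (j ^ 2 : ℝ)⁻¹ / 2 := by
  have hj' : (0 : ℝ) < j := by exact_mod_cast hj
  have hden : 2 * j ≤ j * π * √(cn n j) :=
    calc (2 * j : ℝ) = j * π * (2 / π) := by field_simp
      _ ≤ j * π * √(cn n j) := by gcongr; exact two_div_pi_le_sqrt_cn hj hjn
  have hPin : Pin n (phi j) x ^ 2 ≤ 2 := by
    rw [← sq_abs, ← sq_sqrt zero_le_two]
    exact pow_le_pow_left₀ (abs_nonneg _) (abs_Pin_le (abs_phi_le j) n x) 2
  calc greenGnCoeff n t x j ^ 2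
      = sin (j * π * t * √(cn n j)) ^ 2 / (j * π * √(cn n j)) ^ 2 * Pin n (phi j) x ^ 2 := by
        rw [greenGnCoeff, mul_pow, div_pow]
    _ ≤ (1 : ℝ) / (2 * j) ^ 2 * 2 := by
        gcongr
        exact sin_sq_le_one _
    _ = (j ^ 2 : ℝ)⁻¹ / 2 := by field_simp

theorem stmt2_general (T : ℝ) :
    ∃ K : ℝ, 0 < K ∧ ∀ n : ℕ, 1 ≤ n → ∀ t ∈ Set.Icc (0:ℝ) T, ∀ x ∈ Set.Icc (0:ℝ) 1,
      (∫ z in (0:ℝ)..1, |greenGn n t x z|^2) ≤ K := by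
  refine ⟨1, one_pos, fun n hn t _ x _ => ?_⟩
  have hIcc : Icc 1 (n - 1) = Ioo 0 n := by ext; simp only [mem_Icc, mem_Ioo]; omega
  have hcoeff : ∀ j ∈ Ioo 0 n, greenGnCoeff n t x j ^ 2 ≤ (j ^ 2 : ℝ)⁻¹ / 2 :=
    fun j hj => sq_greenGnCoeff_le (mem_Ioo.mp hj).1 (mem_Ioo.mp hj).2.le t x
  calc ∫ z in (0:ℝ)..1, |greenGn n t x z| ^ 2
      = ∑ j ∈ Ioo 0 n, greenGnCoeff n t x j ^ 2 := by
        simp_rw [sq_abs, greenGn_eq_sum, ← hIcc]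
        exact integral_sq_sum_phi_comp_kappan hn _
    _ ≤ (∑ j ∈ Ioo 0 n, (j ^ 2 : ℝ)⁻¹) / 2 := by rw [sum_div]; exact sum_le_sum hcoeff
    _ ≤ 1 := by
        have := sum_Ioo_inv_sq_le (α := ℝ) 0 n
        norm_num at this
        linarith

theorem stmt2 (T : ℝ) (hT : 0 < T) :
    ∃ K : ℝ, 0 < K ∧ ∀ n : ℕ, 1 ≤ n → ∀ t ∈ Set.Icc (0:ℝ) T, ∀ x ∈ Set.Icc (0:ℝ) 1,
      (∫ z in (0:ℝ)..1, |greenGn n t x z|^2) ≤ K :=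
  stmt2_general T
end
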